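/- arXiv:0904.0073 — 2 statements merged into one kernel-verified Lean document; each statement's English description precedes it below -/
import Mathlib

section
/- The extended half-long line L̄₊ = L₊ ∪ {Ω}, with the order topology where Ω is a greatest element, is the Stone–Čech compactification of L₊: L̄₊ is a compact Hausdorff space containing L₊ as a dense subspace, and every continuous map from L₊ to a compact Hausdorff space extends continuously to L̄₊. -/
/-- The set of countable ordinals (ordinals less than the first uncountable ordinal `ω₁`). -/
def SOmega : Type 1 := Set.Iio (Cardinal.aleph 1).ord

noncomputable instance : LinearOrder SOmega :=
  inferInstanceAs (LinearOrder (Set.Iio (Cardinal.aleph 1).ord))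

/-- The half-open long line `L₊ = [0,1) × S_Ω` with the lexicographic order
(ordinal coordinate first, then the real coordinate). -/
def LongLinePlus : Type 1 := SOmega ×ₗ (Set.Ico (0:ℝ) 1)

noncomputable instance : LinearOrder LongLinePlus :=
  inferInstanceAs (LinearOrder (SOmega ×ₗ (Set.Ico (0:ℝ) 1)))

/-- `L₊` carries the order topology. -/
noncomputable instance : TopologicalSpace LongLinePlus := Preorder.topology LongLinePlus
instance : OrderTopology LongLinePlus := ⟨rfl⟩

/-- The extended half-long line `L̄₊ = L₊ ∪ {Ω}`, with `Ω` adjoined as a top element,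
given the order topology. -/
def LongLinePlusBar : Type 1 := WithTop LongLinePlus

noncomputable instance : LinearOrder LongLinePlusBar :=
  inferInstanceAs (LinearOrder (WithTop LongLinePlus))

instance : OrderTop LongLinePlusBar := inferInstanceAs (OrderTop (WithTop LongLinePlus))

noncomputable instance : TopologicalSpace LongLinePlusBar := Preorder.topology LongLinePlusBar
instance : OrderTopology LongLinePlusBar := ⟨rfl⟩

/-- The inclusion `L₊ ↪ L̄₊`. -/
def LongLinePlus.toBar (x : LongLinePlus) : LongLinePlusBar := WithTop.some x

/-!
Every subset of `L̄₊` has a least upper bound: among its upper bounds in `L₊`, first minimise the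
ordinal coordinate (a well-order), then take the infimum of the real coordinate in that fibre.
So `L̄₊` is a complete linear order, hence compact. Since `ω₁` has uncountable cofinality, every
countable subset of `L₊` is bounded, so monotone sequences in `L₊` converge. Hence a continuous map
`f` from `L₊` to a compact Hausdorff space converges at the end of `L₊`: otherwise `f` would meet
two disjoint closed sets cofinally, and an increasing sequence alternating between their preimages
would converge to a point whose image lies in both. Sending `Ω` to this limit extends `f`.
-/

open Set Filter Topology

theorem compactSpace_of_forall_exists_isLUB {X : Type*} [LinearOrder X] [TopologicalSpace X]
    [OrderTopology X] (h : ∀ s : Set X, ∃ x, IsLUB s x) : CompactSpace X := by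
  choose sup hsup using h
  let _ : SupSet X := ⟨sup⟩
  let L : CompleteLattice X := completeLatticeOfSup X hsup
  let _ : BoundedOrder X := L.toBoundedOrder
  -- The linear order comes first so that its `max`/`min` are the lattice operations.
  let _ : CompleteLinearOrder X :=
    { (inferInstance : LinearOrder X), LinearOrder.toBiheytingAlgebra X, L with }
  exact compactSpace_of_completeLinearOrder

theorem Prod.Lex.exists_isLUB_of_bddAbove {α β : Type*} [LinearOrder α] [WellFoundedLT α]
    [ConditionallyCompleteLinearOrder β] [OrderBot β] {s : Set (α ×ₗ β)} (hs : BddAbove s) :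
    ∃ x, IsLUB s x := by
  obtain ⟨a, ⟨b₀, hb₀⟩, ha⟩ := wellFounded_lt.has_min {a | ∃ b, toLex (a, b) ∈ upperBounds s}
    (by obtain ⟨u, hu⟩ := hs; exact ⟨(ofLex u).1, (ofLex u).2, hu⟩)
  set F := {b | toLex (a, b) ∈ upperBounds s}
  refine ⟨toLex (a, sInf F), fun p hp => ?_, fun u hu => ?_⟩
  · have hle : ∀ b ∈ F, (ofLex p).1 < a ∨ (ofLex p).1 = a ∧ (ofLex p).2 ≤ b :=
      fun b hb => Prod.Lex.le_iff.1 (hb hp)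
    rw [Prod.Lex.le_iff]
    by_cases hpa : (ofLex p).1 < a
    · exact Or.inl hpa
    · exact Or.inr ⟨((hle b₀ hb₀).resolve_left hpa).1,
        le_csInf ⟨b₀, hb₀⟩ fun b hb => ((hle b hb).resolve_left hpa).2⟩
  · have hau : a ≤ (ofLex u).1 := not_lt.1 (ha _ ⟨(ofLex u).2, hu⟩)
    rw [Prod.Lex.le_iff]
    rcases hau.lt_or_eq with hau | rfl
    · exact Or.inl hau
    · exact Or.inr ⟨rfl, csInf_le (OrderBot.bddBelow F) hu⟩

theorem WithTop.exists_isLUB {X : Type*} [Preorder X]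
    (h : ∀ s : Set X, BddAbove s → ∃ x, IsLUB s x) (s : Set (WithTop X)) : ∃ x, IsLUB s x := by
  by_cases hs : ⊤ ∉ s ∧ BddAbove (((↑) : X → WithTop X) ⁻¹' s)
  · obtain ⟨x, hx_ub, hx_least⟩ := h _ hs.2
    refine ⟨x, fun z hz => ?_, fun b hb => ?_⟩
    · induction z with
      | top => exact absurd hz hs.1
      | coe p => exact coe_le_coe.2 (hx_ub hz)
    · induction b with
      | top => exact le_top
      | coe c => exact coe_le_coe.2 (hx_least fun p hp => coe_le_coe.1 (hb hp))
  · refine ⟨⊤, fun _ _ => le_top, fun b hb => ?_⟩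
    induction b with
    | top => exact le_rfl
    | coe c =>
      refine absurd ⟨fun ht => ?_, c, fun p hp => coe_le_coe.1 (hb hp)⟩ hs
      exact not_top_le_coe c (hb ht)

theorem WithTop.comap_coe_nhds_top {ι : Type*} [LinearOrder ι] [TopologicalSpace ι]
    [OrderTopology ι] [NoMaxOrder ι] [Nonempty ι] :
    comap ((↑) : ι → WithTop ι) (𝓝 ⊤) = atTop := by
  refine (nhds_top_basis.comap _).ext atTop_basis_Ioi (fun a ha => ?_) fun c _ => ?_
  · induction a with
    | top => exact absurd ha (lt_irrefl _)
    | coe c => exact ⟨c, trivial, fun x hx => coe_lt_coe.2 hx⟩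
  · exact ⟨c, coe_lt_top c, fun x hx => coe_lt_coe.1 hx⟩

theorem WithTop.denseRange_coe {ι : Type*} [LinearOrder ι] [TopologicalSpace ι]
    [OrderTopology ι] [NoMaxOrder ι] [Nonempty ι] : DenseRange ((↑) : ι → WithTop ι) := by
  intro x
  induction x with
  | top =>
    exact mem_closure_of_tendsto (tendsto_iff_comap.2 comap_coe_nhds_top.ge)
      (Eventually.of_forall mem_range_self)
  | coe p => exact subset_closure (mem_range_self p)

theorem WithTop.exists_continuous_extend_coe {ι K : Type*} [LinearOrder ι] [TopologicalSpace ι]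
    [OrderTopology ι] [NoMaxOrder ι] [Nonempty ι] [TopologicalSpace K] [T3Space K] {f : ι → K}
    (hf : Continuous f) {k : K} (hk : Tendsto f atTop (𝓝 k)) :
    ∃ g : WithTop ι → K, Continuous g ∧ g ∘ (↑) = f := by
  have hd : IsDenseInducing ((↑) : ι → WithTop ι) := ⟨isEmbedding_coe.isInducing, denseRange_coe⟩
  refine ⟨hd.extend f, hd.continuous_extend fun b => ?_, funext (hd.extend_eq hf)⟩
  induction b with
  | top => exact ⟨k, (comap_coe_nhds_top (ι := ι)).symm ▸ hk⟩
  | coe p => exact ⟨f p, hd.isInducing.nhds_eq_comap p ▸ hf.tendsto p⟩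

theorem closure_inter_closure_nonempty_of_frequently_atTop {X : Type*} [LinearOrder X]
    [TopologicalSpace X] [OrderTopology X] [Nonempty X]
    (hX : ∀ u : ℕ → X, Monotone u → ∃ l, Tendsto u atTop (𝓝 l)) {P Q : Set X}
    (hP : ∃ᶠ x in atTop, x ∈ P) (hQ : ∃ᶠ x in atTop, x ∈ Q) : (closure P ∩ closure Q).Nonempty := by
  choose p hp_ge hp_mem using frequently_atTop.1 hP
  choose q hq_ge hq_mem using frequently_atTop.1 hQ
  obtain ⟨x₀⟩ := ‹Nonempty X›
  let u : ℕ → X := fun n => Nat.rec x₀ (fun _ x => q (p x)) n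
  have hu_le n : u n ≤ p (u n) := hp_ge (u n)
  have hp_le n : p (u n) ≤ u (n + 1) := hq_ge (p (u n))
  obtain ⟨l, hl⟩ := hX u (monotone_nat_of_le_succ fun n => (hu_le n).trans (hp_le n))
  have hl_succ : Tendsto (fun n => u (n + 1)) atTop (𝓝 l) := hl.comp (tendsto_add_atTop_nat 1)
  refine ⟨l, mem_closure_of_tendsto
    (tendsto_of_tendsto_of_tendsto_of_le_of_le hl hl_succ hu_le hp_le)
    (Eventually.of_forall fun n => hp_mem (u n)), mem_closure_of_tendsto hl_succ
    (Eventually.of_forall fun n => hq_mem (p (u n)))⟩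

theorem exists_tendsto_atTop_of_continuous {X K : Type*} [LinearOrder X] [TopologicalSpace X]
    [OrderTopology X] [Nonempty X] [TopologicalSpace K] [CompactSpace K] [RegularSpace K]
    (hX : ∀ u : ℕ → X, Monotone u → ∃ l, Tendsto u atTop (𝓝 l)) {f : X → K}
    (hf : Continuous f) : ∃ k, Tendsto f atTop (𝓝 k) := by
  obtain ⟨k, hk⟩ := exists_clusterPt_of_compactSpace (map f atTop)
  refine ⟨k, tendsto_nhds.2 fun U hU hkU => ?_⟩
  by_contra hfU
  obtain ⟨V, hV, hV_closed, hVU⟩ := exists_mem_nhds_isClosed_subset (hU.mem_nhds hkU)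
  obtain ⟨l, hlV, hlU⟩ := closure_inter_closure_nonempty_of_frequently_atTop hX
    (P := f ⁻¹' V) (Q := f ⁻¹' Uᶜ) (frequently_map.1 (hk.frequently hV)) (not_eventually.1 hfU)
  exact closure_minimal subset_rfl (hU.isClosed_compl.preimage hf) hlU
    (hVU (closure_minimal subset_rfl (hV_closed.preimage hf) hlV))

instance : WellFoundedLT SOmega := inferInstanceAs (WellFoundedLT (Set.Iio _))

instance : Nonempty SOmega := ⟨⟨0, (Cardinal.isSuccLimit_ord (Cardinal.aleph0_le_aleph 1)).bot_lt⟩⟩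

theorem SOmega.exists_gt {ι : Type*} [Countable ι] (u : ι → SOmega) : ∃ b, ∀ i, u i < b := by
  have hsucc (i : ι) : Order.succ (u i).1 < Ordinal.omega 1 := by
    simpa only [Cardinal.ord_aleph] using
      (Cardinal.isSuccLimit_ord (Cardinal.aleph0_le_aleph 1)).succ_lt (u i).2
  refine ⟨⟨⨆ i, Order.succ (u i).1, ?_⟩, fun i => ?_⟩
  · simpa only [mem_Iio, Cardinal.ord_aleph] using Ordinal.iSup_lt_omega_one hsucc
  · exact Subtype.coe_lt_coe.1 ((Order.lt_succ _).trans_le (le_ciSup Ordinal.bddAbove_of_small i))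

theorem LongLinePlus.exists_gt {ι : Type*} [Countable ι] (u : ι → LongLinePlus) :
    ∃ b, ∀ i, u i < b := by
  obtain ⟨b, hb⟩ := SOmega.exists_gt fun i => (ofLex (u i)).1
  exact ⟨toLex (b, ⟨0, le_rfl, zero_lt_one⟩), fun i => Prod.Lex.lt_iff.2 (Or.inl (hb i))⟩

instance : NoMaxOrder LongLinePlus :=
  ⟨fun p => (LongLinePlus.exists_gt fun _ : Unit => p).imp fun _ hb => hb ()⟩

instance : Nonempty LongLinePlus := inferInstanceAs (Nonempty (SOmega × Ico (0 : ℝ) 1))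

theorem LongLinePlus.exists_isLUB_of_bddAbove {s : Set LongLinePlus} (hs : BddAbove s) :
    ∃ x, IsLUB s x := by
  have : Inhabited (Ico (0 : ℝ) 1) := ⟨⟨0, le_rfl, zero_lt_one⟩⟩
  exact Prod.Lex.exists_isLUB_of_bddAbove (α := SOmega) (β := Ico (0 : ℝ) 1) hs

theorem LongLinePlus.tendsto_atTop_of_monotone {u : ℕ → LongLinePlus} (hu : Monotone u) :
    ∃ l, Tendsto u atTop (𝓝 l) := by
  obtain ⟨b, hb⟩ := LongLinePlus.exists_gt u
  obtain ⟨l, hl⟩ := LongLinePlus.exists_isLUB_of_bddAbove ⟨b, forall_mem_range.2 fun n => (hb n).le⟩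
  exact ⟨l, tendsto_atTop_isLUB hu hl⟩

instance : CompactSpace LongLinePlusBar :=
  compactSpace_of_forall_exists_isLUB
    (WithTop.exists_isLUB fun _ => LongLinePlus.exists_isLUB_of_bddAbove)

/-- `L̄₊` is the Stone–Čech compactification of `L₊`: it is a compact Hausdorff space
containing `L₊` as a dense subspace, and every continuous map from `L₊` to a compact
Hausdorff space extends continuously to `L̄₊`. -/
theorem longLinePlusBar_is_stoneCech :
    CompactSpace LongLinePlusBar ∧ T2Space LongLinePlusBar ∧
    Topology.IsEmbedding LongLinePlus.toBar ∧ DenseRange LongLinePlus.toBar ∧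
    ∀ (K : Type) [TopologicalSpace K] [CompactSpace K] [T2Space K]
      (f : LongLinePlus → K), Continuous f →
        ∃ g : LongLinePlusBar → K, Continuous g ∧ g ∘ LongLinePlus.toBar = f := by
  refine ⟨inferInstance, inferInstance, WithTop.isEmbedding_coe, WithTop.denseRange_coe, ?_⟩
  intro K _ _ _ f hf
  obtain ⟨k, hk⟩ :=
    exists_tendsto_atTop_of_continuous (fun _ => LongLinePlus.tendsto_atTop_of_monotone) hf
  exact WithTop.exists_continuous_extend_coe hf hk
end

section
/- For every n ≥ 1, the product L̄₊ⁿ of extended half-long lines is the Stone–Čech compactification of L₊ⁿ: every continuous map f : L₊ⁿ → [0,1] extends (uniquely) to a continuous map L̄₊ⁿ → [0,1]. -/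
/-!
Every countable subset of `L₊` is bounded and `L₊` is conditionally complete, so `L₊` is
sequentially compact. This forces a continuous `F` on `L₊ⁿ` to stabilise: for every entourage `U`
there is `a` such that `(F x, F y) ∈ U` whenever `x` and `y` differ only in coordinates where both
are `≥ a`. Otherwise pick counterexamples at the levels of an increasing sequence `A k`, each
counterexample lying below `A (k + 1)`; along a convergent subsequence the differing coordinates of
both counterexamples are squeezed to the same limit, contradicting continuity.
Consequently the continuous maps `z ↦ F (min z a)` on `L̄₊ⁿ` are uniformly Cauchy as `a` grows;
their uniform limit extends `F`, and it is unique because `L₊ⁿ` is dense in `L̄₊ⁿ`.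
-/
open Set Filter Topology Uniformity

section SeqCompact

variable {X Y : Type*} [TopologicalSpace X] [TopologicalSpace Y]

instance Prod.seqCompactSpace [SeqCompactSpace X] [SeqCompactSpace Y] :
    SeqCompactSpace (X × Y) where
  isSeqCompact_univ u _ := by
    obtain ⟨a, φ, hφ, ha⟩ := SeqCompactSpace.tendsto_subseq (Prod.fst ∘ u)
    obtain ⟨b, ψ, hψ, hb⟩ := SeqCompactSpace.tendsto_subseq (Prod.snd ∘ u ∘ φ)
    exact ⟨(a, b), trivial, φ ∘ ψ, hφ.comp hψ, (ha.comp hψ.tendsto_atTop).prodMk_nhds hb⟩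

instance Pi.seqCompactSpace {ι : Type*} [Finite ι] {π : ι → Type*}
    [∀ i, TopologicalSpace (π i)] [∀ i, SeqCompactSpace (π i)] : SeqCompactSpace (∀ i, π i) where
  isSeqCompact_univ u _ := by
    classical
    have := Fintype.ofFinite ι
    suffices ∀ s : Finset ι, ∃ φ : ℕ → ℕ, StrictMono φ ∧
        ∀ i ∈ s, ∃ a, Tendsto (fun k => u (φ k) i) atTop (𝓝 a) by
      obtain ⟨φ, hφ, h⟩ := this Finset.univ
      choose a ha using fun i => h i (Finset.mem_univ i)
      exact ⟨a, trivial, φ, hφ, tendsto_pi_nhds.2 ha⟩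
    intro s
    induction s using Finset.induction_on with
    | empty => exact ⟨id, strictMono_id, by simp⟩
    | insert j s _ ih =>
      obtain ⟨φ, hφ, h⟩ := ih
      obtain ⟨a, ψ, hψ, ha⟩ := SeqCompactSpace.tendsto_subseq fun k => u (φ k) j
      refine ⟨φ ∘ ψ, hφ.comp hψ, (Finset.forall_mem_insert _ _ _).2 ⟨⟨a, ha⟩, fun i hi => ?_⟩⟩
      obtain ⟨b, hb⟩ := h i hi
      exact ⟨b, hb.comp hψ.tendsto_atTop⟩

end SeqCompact

section Order

variable {X : Type*} [LinearOrder X]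

def AgreeBelow {ι : Type*} (a : X) (x y : ι → X) : Prop :=
  ∀ i, x i ≠ y i → a ≤ x i ∧ a ≤ y i

theorem AgreeBelow.mono {ι : Type*} {a b : X} {x y : ι → X} (h : AgreeBelow b x y) (hab : a ≤ b) :
    AgreeBelow a x y :=
  fun i hi => (h i hi).imp hab.trans hab.trans

namespace WithTop

def truncAt (a : X) (z : WithTop X) : X :=
  (min z a).untop ((min_le_right z a).trans_lt (coe_lt_top a)).ne

@[simp]
theorem coe_truncAt (a : X) (z : WithTop X) : ((truncAt a z : X) : WithTop X) = min z a :=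
  coe_untop _ _

theorem truncAt_coe_of_le {a v : X} (h : v ≤ a) : truncAt a (v : WithTop X) = v :=
  coe_injective (by simpa using h)

theorem agreeBelow_truncAt {ι : Type*} (a b : X) (z : ι → WithTop X) :
    AgreeBelow (min a b) (fun i => truncAt a (z i)) (fun i => truncAt b (z i)) := by
  intro i hne
  have hle : ∀ c : X, min a b ≤ truncAt c (z i) ↔ ((min a b : X) : WithTop X) ≤ min (z i) c := by
    intro c
    rw [← coe_truncAt, WithTop.coe_le_coe]
  have ha : ((min a b : X) : WithTop X) ≤ a := WithTop.coe_le_coe.2 (min_le_left a b)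
  have hb : ((min a b : X) : WithTop X) ≤ b := WithTop.coe_le_coe.2 (min_le_right a b)
  have hlt : ((min a b : X) : WithTop X) < z i := by
    refine lt_of_not_ge fun hz => hne (coe_injective ?_)
    rw [coe_truncAt, coe_truncAt, min_eq_left (hz.trans ha), min_eq_left (hz.trans hb)]
  rw [hle, hle]
  exact ⟨le_min hlt.le ha, le_min hlt.le hb⟩

end WithTop

end Order

section OrderTopology

variable {X : Type*} [LinearOrder X] [TopologicalSpace X] [OrderTopology X]

theorem seqCompactSpace_of_exists_isGLB (hglb : ∀ s : Set X, s.Nonempty → ∃ c, IsGLB s c)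
    (hbdd : ∀ u : ℕ → X, BddAbove (range u)) : SeqCompactSpace X where
  isSeqCompact_univ u _ := by
    obtain ⟨g, hmono | hanti⟩ := exists_increasing_or_nonincreasing_subseq (· ≤ ·) u
    · have hg : Monotone (u ∘ g) := monotone_nat_of_le_succ fun k => hmono k (k + 1) k.lt_succ_self
      obtain ⟨c, hc⟩ := hglb _ (hbdd (u ∘ g))
      exact ⟨c, trivial, g, g.strictMono, tendsto_atTop_isLUB hg (isGLB_upperBounds.1 hc)⟩
    · have hg : Antitone (u ∘ g) :=
        antitone_nat_of_succ_le fun k => (not_le.1 (hanti k (k + 1) k.lt_succ_self)).le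
      obtain ⟨c, hc⟩ := hglb _ (range_nonempty (u ∘ g))
      exact ⟨c, trivial, g, g.strictMono, tendsto_atTop_isGLB hg hc⟩

namespace WithTop

theorem continuous_truncAt (a : X) : Continuous (truncAt a) :=
  isEmbedding_coe.continuous_iff.2 <| by
    simp only [Function.comp_def, coe_truncAt]
    exact continuous_id.min continuous_const

theorem denseRange_coe_s8 [Nonempty X] [NoMaxOrder X] : DenseRange ((↑) : X → WithTop X) := by
  intro z
  induction z with
  | top => exact mem_closure_of_tendsto tendsto_coe_atTop (.of_forall mem_range_self)
  | coe a => exact subset_closure (mem_range_self a)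

end WithTop

variable [SeqCompactSpace X] [Nonempty X] {ι M : Type*} [Finite ι] [UniformSpace M]

theorem Continuous.exists_forall_agreeBelow_mem {F : (ι → X) → M} (hF : Continuous F)
    {U : Set (M × M)} (hU : U ∈ 𝓤 M) : ∃ a, ∀ x y, AgreeBelow a x y → (F x, F y) ∈ U := by
  by_contra! h
  choose x y hagree hnotin using h
  have hbound : ∀ a, ∃ b, a ≤ b ∧ ∀ i, x a i ≤ b ∧ y a i ≤ b := fun a => by
    obtain ⟨b, hb⟩ := (((finite_range (x a)).union (finite_range (y a))).insert a).bddAbove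
    exact ⟨b, hb (mem_insert a _),
      fun i => ⟨hb (.inr (.inl ⟨i, rfl⟩)), hb (.inr (.inr ⟨i, rfl⟩))⟩⟩
  choose next hle hnext using hbound
  obtain ⟨a₀⟩ := ‹Nonempty X›
  set A : ℕ → X := fun k => next^[k] a₀
  have hA : ∀ k, A (k + 1) = next (A k) := fun k => Function.iterate_succ_apply' next k a₀
  have hAmono : Monotone A := monotone_nat_of_le_succ fun k => (hA k).symm ▸ hle (A k)
  obtain ⟨⟨L, x', y'⟩, φ, hφ, hlim⟩ :=
    SeqCompactSpace.tendsto_subseq fun k => (A k, x (A k), y (A k))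
  have hAφ : Tendsto (fun k => A (φ k)) atTop (𝓝 L) := (continuous_fst.tendsto _).comp hlim
  have hxφ : Tendsto (fun k => x (A (φ k))) atTop (𝓝 x') :=
    ((continuous_fst.comp continuous_snd).tendsto _).comp hlim
  have hyφ : Tendsto (fun k => y (A (φ k))) atTop (𝓝 y') :=
    ((continuous_snd.comp continuous_snd).tendsto _).comp hlim
  -- A coordinate where `x (A k)` and `y (A k)` differ lies in `[A k, A (k + 1)]`.
  have hsqueeze : ∀ v : ℕ → X, (∀ᶠ k in atTop, A (φ k) ≤ v k ∧ v k ≤ A (φ k + 1)) →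
      Tendsto v atTop (𝓝 L) := fun v hv =>
    tendsto_of_tendsto_of_tendsto_of_le_of_le' hAφ (hAφ.comp (tendsto_add_atTop_nat 1))
      (hv.mono fun _ hk => hk.1)
      (hv.mono fun k hk => hk.2.trans (hAmono (hφ k.lt_succ_self)))
  have hx'y' : x' = y' := by
    funext i
    by_contra hne
    have hdiff : ∀ᶠ k in atTop, x (A (φ k)) i ≠ y (A (φ k)) i :=
      ((tendsto_pi_nhds.1 hxφ i).prodMk_nhds (tendsto_pi_nhds.1 hyφ i)).eventually
        (isClosed_diagonal.isOpen_compl.mem_nhds hne)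
    have hx := hsqueeze _ <| hdiff.mono fun k hk =>
      ⟨(hagree _ i hk).1, (hA _).symm ▸ (hnext _ i).1⟩
    have hy := hsqueeze _ <| hdiff.mono fun k hk =>
      ⟨(hagree _ i hk).2, (hA _).symm ▸ (hnext _ i).2⟩
    exact hne ((tendsto_nhds_unique (tendsto_pi_nhds.1 hxφ i) hx).trans
      (tendsto_nhds_unique (tendsto_pi_nhds.1 hyφ i) hy).symm)
  subst hx'y'
  have hFF : Tendsto (fun k => (F (x (A (φ k))), F (y (A (φ k))))) atTop (𝓝 (F x', F x')) :=
    ((hF.tendsto _).comp hxφ).prodMk_nhds ((hF.tendsto _).comp hyφ)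
  obtain ⟨k, hk⟩ := (hFF.eventually (nhds_le_uniformity _ hU)).exists
  exact hnotin _ hk

theorem Continuous.exists_continuous_extend_withTop [CompleteSpace M] [T2Space M]
    {F : (ι → X) → M} (hF : Continuous F) :
    ∃ G : (ι → WithTop X) → M, Continuous G ∧ ∀ x, G (fun i => x i) = F x := by
  set Fa : X → (ι → WithTop X) → M := fun a z => F fun i => WithTop.truncAt a (z i)
  have hFa : ∀ a, Continuous (Fa a) := fun a =>
    hF.comp (continuous_pi fun i => (WithTop.continuous_truncAt a).comp (continuous_apply i))
  have hcauchy : UniformCauchySeqOn Fa atTop univ := by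
    intro U hU
    obtain ⟨a, ha⟩ := hF.exists_forall_agreeBelow_mem hU
    filter_upwards [prod_mem_prod (eventually_ge_atTop a) (eventually_ge_atTop a)]
      with ⟨b, c⟩ ⟨hb, hc⟩ z _
    exact ha _ _ ((WithTop.agreeBelow_truncAt b c z).mono (le_min hb hc))
  choose G hG using fun z => cauchy_map_iff_exists_tendsto.1 (hcauchy.cauchy_map (mem_univ z))
  have hunif : TendstoUniformly Fa G atTop :=
    tendstoUniformlyOn_univ.1 (hcauchy.tendstoUniformlyOn_of_tendsto fun z _ => hG z)
  refine ⟨G, hunif.continuous (.of_forall hFa), fun x => tendsto_nhds_unique (hG _) ?_⟩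
  refine tendsto_const_nhds.congr' ?_
  filter_upwards [eventually_all.2 fun i => eventually_ge_atTop (x i)] with a ha
  simp only [Fa, WithTop.truncAt_coe_of_le (ha _)]

theorem Continuous.existsUnique_continuous_extend_withTop [NoMaxOrder X] [CompleteSpace M]
    [T2Space M] {F : (ι → X) → M} (hF : Continuous F) :
    ∃! G : (ι → WithTop X) → M, Continuous G ∧ ∀ x, G (fun i => x i) = F x := by
  obtain ⟨G, hG, hGF⟩ := hF.exists_continuous_extend_withTop
  refine ⟨G, ⟨hG, hGF⟩, fun G' ⟨hG', hG'F⟩ => ?_⟩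
  exact (DenseRange.piMap fun _ => WithTop.denseRange_coe_s8).equalizer hG' hG
    (funext fun x => (hG'F x).trans (hGF x).symm)

end OrderTopology

theorem Prod.Lex.exists_isGLB {α β : Type*} [LinearOrder α] [WellFoundedLT α] [LinearOrder β]
    (hβ : ∀ t : Set β, t.Nonempty → ∃ c, IsGLB t c) {s : Set (α ×ₗ β)} (hs : s.Nonempty) :
    ∃ c, IsGLB s c := by
  obtain ⟨_, ⟨p, hp, rfl⟩, hmin⟩ := wellFounded_lt.has_min _ (hs.image fun x => (ofLex x).1)
  set d := (ofLex p).1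
  obtain ⟨c, hc⟩ := hβ {b | toLex (d, b) ∈ s} ⟨(ofLex p).2, hp⟩
  refine ⟨toLex (d, c), fun x hx => ?_, fun l hl => ?_⟩
  · obtain ⟨⟨a, b⟩, rfl⟩ := toLex.surjective x
    rcases (not_lt.1 (hmin _ ⟨_, hx, rfl⟩)).lt_or_eq with hlt | rfl
    · exact Prod.Lex.toLex_le_toLex.2 (.inl hlt)
    · exact Prod.Lex.toLex_le_toLex.2 (.inr ⟨rfl, hc.1 hx⟩)
  · obtain ⟨⟨a, b⟩, rfl⟩ := toLex.surjective l
    rcases Prod.Lex.le_iff.1 (hl hp) with hlt | ⟨rfl, -⟩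
    · exact Prod.Lex.toLex_le_toLex.2 (.inl hlt)
    · refine Prod.Lex.toLex_le_toLex.2 (.inr ⟨rfl, hc.2 fun b' hb' => ?_⟩)
      rcases Prod.Lex.toLex_le_toLex.1 (hl hb') with hlt | ⟨-, hle⟩
      · exact absurd hlt (lt_irrefl _)
      · exact hle

theorem Prod.Lex.bddAbove_of_bddAbove_fst {α β : Type*} [Preorder α] [NoMaxOrder α] [Preorder β]
    [Nonempty β] {s : Set (α ×ₗ β)} (h : BddAbove ((fun x => (ofLex x).1) '' s)) :
    BddAbove s := by
  obtain ⟨b, hb⟩ := h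
  obtain ⟨b', hb'⟩ := exists_gt b
  obtain ⟨t⟩ := ‹Nonempty β›
  exact ⟨toLex (b', t), fun x hx => Prod.Lex.le_iff.2 (.inl ((hb ⟨x, hx, rfl⟩).trans_lt hb'))⟩

theorem Set.Ico.exists_isGLB {α : Type*} [ConditionallyCompleteLinearOrder α] {a b : α}
    {t : Set (Ico a b)} (ht : t.Nonempty) : ∃ c, IsGLB t c := by
  obtain ⟨x, hx⟩ := ht
  -- `Ico a b` gets its `sInf` from `ordConnectedSubsetConditionallyCompleteLinearOrder`.
  let _ : Inhabited (Ico a b) := ⟨x⟩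
  exact ⟨sInf t, isGLB_csInf ⟨x, hx⟩ ⟨⟨a, le_rfl, x.2.1.trans_lt x.2.2⟩, fun y _ => y.2.1⟩⟩

namespace SOmega

instance : WellFoundedLT SOmega := inferInstanceAs (WellFoundedLT (Iio (Cardinal.aleph 1).ord))

-- `SOmega` is cut off at `(ℵ₁).ord`; Mathlib states its facts about `ω₁` as `ω_ 1`.
theorem coe_lt_omega_one (γ : SOmega) : γ.1 < Ordinal.omega 1 :=
  Cardinal.ord_aleph 1 ▸ γ.2

def ofLt {γ : Ordinal} (h : γ < Ordinal.omega 1) : SOmega :=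
  ⟨γ, (Cardinal.ord_aleph 1).symm ▸ h⟩

instance : NoMaxOrder SOmega where
  exists_gt γ := ⟨ofLt ((Cardinal.isSuccLimit_omega 1).succ_lt γ.coe_lt_omega_one),
    Order.lt_succ γ.1⟩

instance : Nonempty SOmega := ⟨ofLt (Ordinal.omega_pos 1)⟩

theorem bddAbove_range (u : ℕ → SOmega) : BddAbove (range u) :=
  ⟨ofLt (Ordinal.iSup_lt_omega_one fun k => (u k).coe_lt_omega_one),
    forall_mem_range.2 fun k => le_ciSup (Ordinal.bddAbove_of_small (s := range _)) k⟩

end SOmega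

namespace LongLinePlus

instance : Nonempty LongLinePlus :=
  inferInstanceAs (Nonempty (SOmega ×ₗ Ico (0 : ℝ) 1))

instance : NoMaxOrder LongLinePlus :=
  inferInstanceAs (NoMaxOrder (SOmega ×ₗ Ico (0 : ℝ) 1))

instance : SeqCompactSpace LongLinePlus :=
  seqCompactSpace_of_exists_isGLB
    (fun _ hs => Prod.Lex.exists_isGLB (fun _ => Ico.exists_isGLB) hs)
    fun u => Prod.Lex.bddAbove_of_bddAbove_fst <| by
      obtain ⟨b, hb⟩ := SOmega.bddAbove_range fun k => (ofLex (u k)).1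
      exact ⟨b, forall_mem_image.2 (forall_mem_range.2 fun k => hb (mem_range_self k))⟩

end LongLinePlus

theorem longLinePlusBar_pow_is_stoneCech_general (n : ℕ)
    (f : (Fin n → LongLinePlus) → Set.Icc (0:ℝ) 1) (hf : Continuous f) :
    ∃! g : (Fin n → LongLinePlusBar) → Set.Icc (0:ℝ) 1,
      Continuous g ∧ ∀ x : Fin n → LongLinePlus, g (fun i => (x i).toBar) = f x :=
  hf.existsUnique_continuous_extend_withTop

/-- For `n ≥ 1`, `L̄₊ⁿ` is the Stone–Čech compactification of `L₊ⁿ`: every continuous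
map `f : L₊ⁿ → [0,1]` extends uniquely to a continuous map `L̄₊ⁿ → [0,1]`. -/
theorem longLinePlusBar_pow_is_stoneCech (n : ℕ) (hn : 1 ≤ n)
    (f : (Fin n → LongLinePlus) → Set.Icc (0:ℝ) 1) (hf : Continuous f) :
    ∃! g : (Fin n → LongLinePlusBar) → Set.Icc (0:ℝ) 1,
      Continuous g ∧ ∀ x : Fin n → LongLinePlus, g (fun i => (x i).toBar) = f x :=
  longLinePlusBar_pow_is_stoneCech_general n f hf
end
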